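/- arXiv:2412.03613 — 3 statements merged into one kernel-verified Lean document; each statement's English description precedes it below -/
import Mathlib

section
/- Let K : D → L(H) be an analytic family of compact operators on a separable Hilbert space H, defined on an open connected subset D of ℂ. Then either (I − K(z)) is invertible for no z in D, or there is a discrete subset S of D such that (I − K(z))⁻¹ exists for all z in D \ S and for each z in S the equation K(z)v = v has a nonzero solution v in H. -/
/-!
Near a point `z₀ ∈ D`, split `K z₀ = F + E₀` with `F` of finite rank and `‖E₀‖ < 1`. For `z`
close to `z₀` the operator `1 - (K z - F)` is invertible, and
`1 - K z = (1 - G z) (1 - (K z - F))` with `G z = F (1 - (K z - F))⁻¹`, whose range lies in the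
finite-dimensional space `V = range F`. Hence `1 - K z` is invertible iff `1 - G z` restricted to
`V` is, i.e. iff the holomorphic function `d z = det (1 - G z)|_V` does not vanish. The zeros of
`d` are either a whole neighbourhood of `z₀` or avoid a punctured one, and connectedness of `D`
makes the same alternative hold everywhere. Points where `1 - K z` is not invertible carry a
fixed vector of `K z` by the Fredholm alternative for compact operators.
-/

open Filter Topology Function

namespace IsCompactOperator

variable {𝕜 E : Type*} [NontriviallyNormedField 𝕜] [NormedAddCommGroup E] [NormedSpace 𝕜 E]
  [CompleteSpace E] {T : E →L[𝕜] E}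

theorem exists_ne_zero_apply_eq_self (hT : IsCompactOperator T) (h : ¬IsUnit (1 - T)) :
    ∃ v ≠ 0, T v = v := by
  rcases hasEigenvalue_or_mem_resolventSet hT one_ne_zero with hμ | hres
  · obtain ⟨v, hv, hv0⟩ := hμ.exists_hasEigenvector
    exact ⟨v, hv0, by simpa using Module.End.mem_eigenspace_iff.1 hv⟩
  · exact absurd (by simpa [spectrum.mem_resolventSet_iff] using hres) h

theorem isUnit_one_sub_iff_injective (hT : IsCompactOperator T) :
    IsUnit (1 - T) ↔ Injective ⇑(1 - T) := by
  refine ⟨fun h => (ContinuousLinearMap.isUnit_iff_bijective.1 h).1, fun hinj => ?_⟩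
  by_contra h
  obtain ⟨v, hv0, hv⟩ := hT.exists_ne_zero_apply_eq_self h
  exact hv0 (hinj (by simp [hv]))

end IsCompactOperator

theorem LinearMap.injective_one_sub_restrict_iff {R M : Type*} [Ring R] [AddCommGroup M]
    [Module R M] {G : M →ₗ[R] M} {V : Submodule R M} (hG : ∀ x, G x ∈ V) :
    Injective ⇑(1 - G.restrict (p := V) fun x _ => hG x) ↔ Injective ⇑(1 - G) := by
  simp only [← LinearMap.ker_eq_bot, Submodule.eq_bot_iff, LinearMap.mem_ker, LinearMap.sub_apply,
    Module.End.one_apply]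
  refine ⟨fun h x hx => ?_, fun h v hv => Subtype.ext (h v (by simpa using congrArg Subtype.val hv))⟩
  have hxV : x ∈ V := by
    rw [sub_eq_zero.1 hx]
    exact hG x
  simpa using congrArg Subtype.val (h ⟨x, hxV⟩ (Subtype.ext (by simpa using hx)))

theorem DifferentiableAt.matrix_det {𝕜 X ι : Type*} [NontriviallyNormedField 𝕜]
    [NormedAddCommGroup X] [NormedSpace 𝕜 X] [Fintype ι] [DecidableEq ι]
    {A : X → Matrix ι ι 𝕜} {x : X} (hA : ∀ i j, DifferentiableAt 𝕜 (fun y => A y i j) x) :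
    DifferentiableAt 𝕜 (fun y => (A y).det) x := by
  simp only [Matrix.det_apply]
  fun_prop

section FiniteRank

variable {𝕜 E : Type*} [RCLike 𝕜] [NormedAddCommGroup E] [NormedSpace 𝕜 E]
  {V : Submodule 𝕜 E} [FiniteDimensional 𝕜 V]

theorem isCompactOperator_of_forall_apply_mem {G : E →L[𝕜] E} (hG : ∀ x, G x ∈ V) :
    IsCompactOperator G :=
  (isCompactOperator_of_locallyCompactSpace_dom (G.codRestrict V hG)).clm_comp V.subtypeL

theorem isUnit_one_sub_iff_det_restrict_ne_zero [CompleteSpace E] {G : E →L[𝕜] E}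
    (hG : ∀ x, G x ∈ V) :
    IsUnit (1 - G) ↔ LinearMap.det (1 - (G : E →ₗ[𝕜] E).restrict (p := V) fun x _ => hG x) ≠ 0 := by
  rw [(isCompactOperator_of_forall_apply_mem hG).isUnit_one_sub_iff_injective, Ne,
    LinearMap.det_eq_zero_iff_ker_ne_bot, not_not, LinearMap.ker_eq_bot,
    LinearMap.injective_one_sub_restrict_iff]
  rfl

theorem DifferentiableAt.det_one_sub_restrict {X : Type*} [NormedAddCommGroup X]
    [NormedSpace 𝕜 X] {G : X → E →L[𝕜] E} (hG : ∀ y x, G y x ∈ V) {y : X}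
    (hGy : DifferentiableAt 𝕜 G y) :
    DifferentiableAt 𝕜
      (fun y => LinearMap.det (1 - (G y : E →ₗ[𝕜] E).restrict (p := V) fun x _ => hG y x)) y := by
  obtain ⟨P, hP⟩ := Submodule.ClosedComplemented.of_finiteDimensional V
  let b := Module.finBasis 𝕜 V
  simp_rw [← LinearMap.det_toMatrix b]
  refine DifferentiableAt.matrix_det fun i j => ?_
  -- a continuous projection onto `V` makes each matrix entry a continuous functional of `G y`
  have hentry : ∀ y, LinearMap.toMatrix b b (1 - (G y : E →ₗ[𝕜] E).restrict (p := V)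
      fun x _ => hG y x) i j = (LinearMap.toContinuousLinearMap (b.coord i)) (P (b j - G y (b j))) := by
    intro y
    rw [LinearMap.toMatrix_apply, map_sub, hP, ← Subtype.coe_mk (G y (b j)) (hG y (b j)), hP]
    rfl
  simp_rw [hentry]
  fun_prop

end FiniteRank

theorem IsCompactOperator.exists_finiteDimensional_range_norm_sub_lt {𝕜 E : Type*} [RCLike 𝕜]
    [NormedAddCommGroup E] [InnerProductSpace 𝕜 E] {T : E →L[𝕜] E} (hT : IsCompactOperator T)
    {ε : ℝ} (hε : 0 < ε) :
    ∃ F : E →L[𝕜] E, FiniteDimensional 𝕜 (F : E →ₗ[𝕜] E).range ∧ ‖T - F‖ < ε := by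
  obtain ⟨t, ht, hTt⟩ := hT.image_closedBall_subset_compact 1
  obtain ⟨c, hc, hct⟩ := Metric.totallyBounded_iff.1 ht.totallyBounded (ε / 2) (by positivity)
  let V := Submodule.span 𝕜 c
  have : FiniteDimensional 𝕜 V := FiniteDimensional.span_of_finite 𝕜 hc
  refine ⟨V.starProjection ∘L T, Submodule.finiteDimensional_of_le (S₂ := V) ?_, ?_⟩
  · rintro _ ⟨x, rfl⟩
    exact V.starProjection_apply_mem (T x)
  have hnear : ∀ x, ‖x‖ = 1 → ‖T x - V.starProjection (T x)‖ ≤ ε / 2 := by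
    intro x hx
    obtain ⟨y, hy, hxy⟩ := Set.mem_iUnion₂.1 (hct (hTt ⟨x, by simp [hx], rfl⟩))
    rw [V.starProjection_minimal]
    refine (ciInf_le ⟨0, Set.forall_mem_range.2 fun _ => norm_nonneg _⟩
      ⟨y, Submodule.subset_span hy⟩).trans ?_
    simpa [dist_eq_norm] using (Metric.mem_ball.1 hxy).le
  calc ‖T - V.starProjection ∘L T‖ ≤ ε / 2 :=
        ContinuousLinearMap.opNorm_le_of_unit_norm (by positivity) hnear
    _ < ε := half_lt_self hε

theorem exists_analyticAt_isUnit_one_sub_iff {H : Type*} [NormedAddCommGroup H]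
    [InnerProductSpace ℂ H] [CompleteSpace H] {K : ℂ → H →L[ℂ] H} {z₀ : ℂ}
    (hK : ∀ᶠ z in 𝓝 z₀, DifferentiableAt ℂ K z) (hcpt : IsCompactOperator (K z₀)) :
    ∃ d : ℂ → ℂ, AnalyticAt ℂ d z₀ ∧ ∀ᶠ z in 𝓝 z₀, (IsUnit (1 - K z) ↔ d z ≠ 0) := by
  obtain ⟨F, hF, hKF⟩ := hcpt.exists_finiteDimensional_range_norm_sub_lt one_pos
  have hsmall : ∀ᶠ z in 𝓝 z₀, ‖K z - F‖ < 1 :=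
    ((hK.self_of_nhds.continuousAt.sub continuousAt_const).norm).eventually_lt
      continuousAt_const hKF
  let G : ℂ → H →L[ℂ] H := fun z => F * Ring.inverse (1 - (K z - F))
  have hG : ∀ z x, G z x ∈ (F : H →ₗ[ℂ] H).range := fun z x => LinearMap.mem_range_self _ _
  refine ⟨fun z => LinearMap.det (1 - (G z : H →ₗ[ℂ] H).restrict fun x _ => hG z x),
    Complex.analyticAt_iff_eventually_differentiableAt.2 ?_, ?_⟩
  · filter_upwards [hK, hsmall] with z hKz hz
    exact .det_one_sub_restrict hG <| (differentiableAt_const F).mul <| .inverse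
      (h := fun z => 1 - (K z - F)) (by fun_prop) (Units.oneSub _ hz).isUnit
  · filter_upwards [hsmall] with z hz
    let u := Units.oneSub _ hz
    have hu : 1 - (K z - F) = ↑u := (Units.val_oneSub _ hz).symm
    have hfactor : 1 - K z = (1 - G z) * u := by
      calc 1 - K z = ↑u - F := by rw [← hu]; abel
        _ = (1 - F * ↑u⁻¹) * u := by rw [sub_mul, one_mul, mul_assoc, Units.inv_mul, mul_one]
        _ = (1 - G z) * u := by simp only [G, hu, Ring.inverse_unit]
    rw [hfactor, Units.isUnit_mul_units, isUnit_one_sub_iff_det_restrict_ne_zero (hG z)]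

theorem IsPreconnected.forall_or_forall_eventually_nhdsNE {X : Type*} [TopologicalSpace X]
    [T1Space X] [∀ x : X, (𝓝[≠] x).NeBot] {D : Set X} (hD : IsPreconnected D) {p : X → Prop}
    (h : ∀ z ∈ D, (∀ᶠ w in 𝓝 z, ¬p w) ∨ ∀ᶠ w in 𝓝[≠] z, p w) :
    (∀ z ∈ D, ¬p z) ∨ ∀ z ∈ D, ∀ᶠ w in 𝓝[≠] z, p w := by
  have hdisj : Disjoint {z | ∀ᶠ w in 𝓝 z, ¬p w} {z | ∀ᶠ w in 𝓝[≠] z, p w} := by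
    refine Set.disjoint_left.2 fun z hnp hp => ?_
    exact ((eventually_nhdsWithin_of_eventually_nhds hnp).and hp).exists.elim fun _ h => h.1 h.2
  exact (hD.subset_or_subset isOpen_setOfPred_eventually_nhds
    isOpen_setOfPred_eventually_nhdsWithin hdisj h).imp
    (fun hnp z hz => (hnp hz).self_of_nhds) id

theorem stmt2_general {H : Type*} [NormedAddCommGroup H] [InnerProductSpace ℂ H]
    [CompleteSpace H]
    (D : Set ℂ) (hD : IsOpen D) (hDconn : IsConnected D)
    (K : ℂ → H →L[ℂ] H) (hK : DifferentiableOn ℂ K D)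
    (hcpt : ∀ z ∈ D, IsCompactOperator (K z)) :
    (∀ z ∈ D, ¬ IsUnit ((1 : H →L[ℂ] H) - K z)) ∨
    (∃ S ⊆ D, (∀ z ∈ D, ¬ AccPt z (Filter.principal S)) ∧
      (∀ z ∈ D \ S, IsUnit ((1 : H →L[ℂ] H) - K z)) ∧
      (∀ z ∈ S, ∃ v : H, v ≠ 0 ∧ K z v = v)) := by
  have hlocal : ∀ z ∈ D, (∀ᶠ w in 𝓝 z, ¬IsUnit (1 - K w)) ∨ ∀ᶠ w in 𝓝[≠] z, IsUnit (1 - K w) := by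
    intro z hz
    obtain ⟨d, hd, hiff⟩ := exists_analyticAt_isUnit_one_sub_iff
      (hK.eventually_differentiableAt (hD.mem_nhds hz)) (hcpt z hz)
    refine hd.eventually_eq_zero_or_eventually_ne_zero.imp (fun h => ?_) fun h => ?_
    · filter_upwards [hiff, h] with w hw hw0
      simp [hw, hw0]
    · filter_upwards [eventually_nhdsWithin_of_eventually_nhds hiff, h] with w hw hw0
      exact hw.2 hw0
  rcases hDconn.isPreconnected.forall_or_forall_eventually_nhdsNE hlocal with h | h
  · exact .inl h
  refine .inr ⟨{z ∈ D | ¬IsUnit (1 - K z)}, Set.sep_subset _ _, fun z hz => ?_,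
    fun z hz => not_not.1 fun hnu => hz.2 ⟨hz.1, hnu⟩,
    fun z hz => (hcpt z hz.1).exists_ne_zero_apply_eq_self hz.2⟩
  rw [accPt_iff_frequently_nhdsNE, not_frequently]
  filter_upwards [h z hz] with w hw hwS using hwS.2 hw

/-- Analytic Fredholm theorem: for an analytic family `K : D → L(H)` of compact
operators on a separable complex Hilbert space, either `I - K(z)` is invertible for
no `z ∈ D`, or there is a subset `S ⊆ D`, discrete in `D`, such that `I - K(z)` is
invertible for all `z ∈ D \ S` and `K(z)v = v` has a nonzero solution for `z ∈ S`. -/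
theorem stmt2 {H : Type*} [NormedAddCommGroup H] [InnerProductSpace ℂ H]
    [CompleteSpace H] [TopologicalSpace.SeparableSpace H]
    (D : Set ℂ) (hD : IsOpen D) (hDconn : IsConnected D)
    (K : ℂ → H →L[ℂ] H) (hK : DifferentiableOn ℂ K D)
    (hcpt : ∀ z ∈ D, IsCompactOperator (K z)) :
    (∀ z ∈ D, ¬ IsUnit ((1 : H →L[ℂ] H) - K z)) ∨
    (∃ S ⊆ D, (∀ z ∈ D, ¬ AccPt z (Filter.principal S)) ∧
      (∀ z ∈ D \ S, IsUnit ((1 : H →L[ℂ] H) - K z)) ∧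
      (∀ z ∈ S, ∃ v : H, v ≠ 0 ∧ K z v = v)) :=
  stmt2_general D hD hDconn K hK hcpt
end

section
/- Let S ∈ C²(ℝ) with S' and S'' bounded, W ∈ W^{1,1}(ℝ), and v̄ measurable with W ⋆ v̄ defined a.e. Then the map F̃ : L²(ℝ) → L²(ℝ), F̃(v) = S(W ⋆ (v̄+v)) − S(W ⋆ v̄), is Fréchet differentiable at every v ∈ L², with derivative dF̃(v)·h = S'(W ⋆ (v̄+v)) · (W ⋆ h), and the remainder satisfies ‖F̃(v+h) − F̃(v) − dF̃(v)·h‖₂ ≤ (C/2) ‖S''‖_∞ ‖W‖²_{W^{1,1}} ‖h‖₂² for a constant C depending only on the Banach algebra constant of H¹(ℝ). -/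
/-!
Write `W ⋆ g` for `x ↦ ∫ W (x - y) g y`. Young's inequality `‖W ⋆ g‖₂ ≤ ‖W‖₁ ‖g‖₂` (a weighted
Cauchy–Schwarz inequality followed by Tonelli) and Cauchy–Schwarz `|W ⋆ g| ≤ ‖W‖₂ ‖g‖₂` control
the convolutions, and the fundamental theorem of calculus gives `‖W‖_∞ ≤ ‖W'‖₁`, hence
`‖W‖₂² ≤ ‖W‖_∞ ‖W‖₁ ≤ ‖W‖²_{W^{1,1}}`.

Since `S` is Lipschitz, `|F̃(v)| ≤ ‖S'‖_∞ |W ⋆ v|` pointwise, so `F̃(v) ∈ L²`. By Taylor's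
theorem the remainder is pointwise at most `‖S''‖_∞ |W ⋆ h|² ≤ ‖S''‖_∞ ‖W‖₂ ‖h‖₂ |W ⋆ h|`, and
Young's inequality bounds its `L²` norm by `‖S''‖_∞ ‖W‖₂ ‖W‖₁ ‖h‖₂²`, which gives `C = 2`.
-/

open MeasureTheory
open scoped ENNReal

lemma sq_eLpNorm_two {α E : Type*} [MeasurableSpace α] [NormedAddCommGroup E] {μ : Measure α}
    (f : α → E) : eLpNorm f 2 μ ^ 2 = ∫⁻ x, ‖f x‖ₑ ^ 2 ∂μ := by
  simpa using eLpNorm_nnreal_pow_eq_lintegral (μ := μ) (f := f) (p := 2) two_ne_zero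

lemma lintegral_mul_sq_le {α : Type*} [MeasurableSpace α] {μ : Measure α} {f g : α → ℝ≥0∞}
    (hf : AEMeasurable f μ) (hg : AEMeasurable g μ) :
    (∫⁻ a, f a * g a ∂μ) ^ 2 ≤ (∫⁻ a, f a ∂μ) * ∫⁻ a, f a * g a ^ 2 ∂μ := by
  have hsqrt (x : ℝ≥0∞) : (x ^ 2) ^ (2⁻¹ : ℝ) = x := by
    simpa using ENNReal.pow_rpow_inv_natCast two_ne_zero x
  have hsq (x : ℝ≥0∞) : (x ^ (2⁻¹ : ℝ)) ^ 2 = x := by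
    simpa using ENNReal.rpow_inv_natCast_pow two_ne_zero x
  have key := ENNReal.lintegral_mul_norm_pow_le hf (hf.mul (hg.pow_const 2))
    (by norm_num) (by norm_num) (add_halves (1 : ℝ))
  have hfg (a : α) : f a ^ (2⁻¹ : ℝ) * (f a * g a ^ 2) ^ (2⁻¹ : ℝ) = f a * g a := by
    rw [← ENNReal.mul_rpow_of_nonneg _ _ (by norm_num), ← mul_assoc, ← sq, ← mul_pow, hsqrt]
  simp only [Pi.mul_apply, one_div, hfg] at key
  calc (∫⁻ a, f a * g a ∂μ) ^ 2
      ≤ ((∫⁻ a, f a ∂μ) ^ (2⁻¹ : ℝ) * (∫⁻ a, f a * g a ^ 2 ∂μ) ^ (2⁻¹ : ℝ)) ^ 2 := by gcongr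
    _ = (∫⁻ a, f a ∂μ) * ∫⁻ a, f a * g a ^ 2 ∂μ := by rw [mul_pow, hsq, hsq]

lemma integral_mul_add {α : Type*} [MeasurableSpace α] {μ : Measure α} {f a b : α → ℝ}
    (ha : Integrable (fun y => f y * a y) μ) (hb : Integrable (fun y => f y * b y) μ) :
    ∫ y, f y * (a y + b y) ∂μ = ∫ y, f y * a y ∂μ + ∫ y, f y * b y ∂μ := by
  simp_rw [mul_add]; exact integral_add ha hb

section Convolution

variable {G : Type*} [MeasurableSpace G] [AddCommGroup G] [MeasurableAdd₂ G] [MeasurableNeg G]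
  {μ : Measure G} {W g : G → ℝ}

lemma aestronglyMeasurable_conv [SFinite μ] [μ.IsAddLeftInvariant]
    (hW : AEStronglyMeasurable W μ) (hg : AEStronglyMeasurable g μ) :
    AEStronglyMeasurable (fun x => ∫ y, W (x - y) * g y ∂μ) μ :=
  ((hW.comp_quasiMeasurePreserving (quasiMeasurePreserving_sub μ μ)).mul
    hg.comp_snd).integral_prod_right'

variable [μ.IsAddLeftInvariant] [μ.IsNegInvariant]

lemma integrable_conv_integrand (hW : MemLp W 2 μ) (hg : MemLp g 2 μ) (x : G) :
    Integrable (fun y => W (x - y) * g y) μ :=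
  (hW.comp_measurePreserving (Measure.measurePreserving_sub_left μ x)).integrable_mul hg

lemma enorm_conv_le (hW : AEStronglyMeasurable W μ) (hg : AEStronglyMeasurable g μ) (x : G) :
    ‖∫ y, W (x - y) * g y ∂μ‖ₑ ≤ eLpNorm W 2 μ * eLpNorm g 2 μ := by
  have hWx := Measure.measurePreserving_sub_left μ x
  calc ‖∫ y, W (x - y) * g y ∂μ‖ₑ ≤ eLpNorm (fun y => W (x - y) * g y) 1 μ :=
        (enorm_integral_le_lintegral_enorm _).trans_eq eLpNorm_one_eq_lintegral_enorm.symm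
    _ ≤ 1 * eLpNorm (fun y => W (x - y)) 2 μ * eLpNorm g 2 μ :=
        eLpNorm_le_eLpNorm_mul_eLpNorm_of_nnnorm (hW.comp_measurePreserving hWx) hg (· * ·) 1
          (.of_forall fun y => by simp [nnnorm_mul])
    _ = eLpNorm W 2 μ * eLpNorm g 2 μ := by
        rw [one_mul, ← eLpNorm_comp_measurePreserving hW hWx]; rfl

lemma eLpNorm_conv_le [SFinite μ] (hW : AEMeasurable W μ) (hg : AEMeasurable g μ) :
    eLpNorm (fun x => ∫ y, W (x - y) * g y ∂μ) 2 μ ≤ eLpNorm W 1 μ * eLpNorm g 2 μ := by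
  have hJ : AEMeasurable (fun p : G × G => ‖W (p.1 - p.2)‖ₑ * ‖g p.2‖ₑ ^ 2) (μ.prod μ) :=
    (hW.comp_quasiMeasurePreserving (quasiMeasurePreserving_sub μ μ)).enorm.mul
      (hg.enorm.pow_const 2).comp_snd
  have hW_left (x : G) : ∫⁻ y, ‖W (x - y)‖ₑ ∂μ = eLpNorm W 1 μ := by
    rw [eLpNorm_one_eq_lintegral_enorm, lintegral_sub_left_eq_self (fun z => ‖W z‖ₑ) x]
  have hW_right (y : G) : ∫⁻ x, ‖W (x - y)‖ₑ ∂μ = eLpNorm W 1 μ := by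
    rw [eLpNorm_one_eq_lintegral_enorm, lintegral_sub_right_eq_self (fun z => ‖W z‖ₑ) y]
  have hpointwise (x : G) : ‖∫ y, W (x - y) * g y ∂μ‖ₑ ^ 2
      ≤ eLpNorm W 1 μ * ∫⁻ y, ‖W (x - y)‖ₑ * ‖g y‖ₑ ^ 2 ∂μ := by
    have hWx : AEMeasurable (fun y => ‖W (x - y)‖ₑ) μ := (hW.comp_quasiMeasurePreserving
      (Measure.measurePreserving_sub_left μ x).quasiMeasurePreserving).enorm
    calc ‖∫ y, W (x - y) * g y ∂μ‖ₑ ^ 2 ≤ (∫⁻ y, ‖W (x - y)‖ₑ * ‖g y‖ₑ ∂μ) ^ 2 := by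
          gcongr
          simpa only [enorm_mul] using enorm_integral_le_lintegral_enorm (fun y => W (x - y) * g y)
      _ ≤ _ := (lintegral_mul_sq_le hWx hg.enorm).trans_eq (by rw [hW_left])
  have htonelli : ∫⁻ x, ∫⁻ y, ‖W (x - y)‖ₑ * ‖g y‖ₑ ^ 2 ∂μ ∂μ
      = eLpNorm W 1 μ * eLpNorm g 2 μ ^ 2 := by
    rw [lintegral_lintegral_swap hJ, sq_eLpNorm_two,
      ← lintegral_const_mul'' _ (hg.enorm.pow_const 2)]
    refine lintegral_congr fun y => ?_
    have hWy : AEMeasurable (fun x => ‖W (x - y)‖ₑ) μ := (hW.comp_quasiMeasurePreserving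
      (measurePreserving_sub_right μ y).quasiMeasurePreserving).enorm
    rw [lintegral_mul_const'' _ hWy, hW_right]
  refine (ENNReal.pow_le_pow_left_iff two_ne_zero).1 ?_
  calc eLpNorm (fun x => ∫ y, W (x - y) * g y ∂μ) 2 μ ^ 2
      = ∫⁻ x, ‖∫ y, W (x - y) * g y ∂μ‖ₑ ^ 2 ∂μ := sq_eLpNorm_two _
    _ ≤ ∫⁻ x, eLpNorm W 1 μ * ∫⁻ y, ‖W (x - y)‖ₑ * ‖g y‖ₑ ^ 2 ∂μ ∂μ := lintegral_mono hpointwise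
    _ = (eLpNorm W 1 μ * eLpNorm g 2 μ) ^ 2 := by
        rw [lintegral_const_mul'' _ hJ.lintegral_prod_right', htonelli]; ring

lemma memLp_conv [SFinite μ] (hW : Integrable W μ) (hg : MemLp g 2 μ) :
    MemLp (fun x => ∫ y, W (x - y) * g y ∂μ) 2 μ :=
  ⟨aestronglyMeasurable_conv hW.1 hg.1,
    (eLpNorm_conv_le hW.1.aemeasurable hg.1.aemeasurable).trans_lt
      (ENNReal.mul_lt_top (memLp_one_iff_integrable.2 hW).2 hg.2)⟩

end Convolution

section Kernel

variable {E : Type*} [NormedAddCommGroup E] [NormedSpace ℝ E] [CompleteSpace E] {W W' : ℝ → E}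

lemma norm_sub_le_integral_norm_of_hasDerivAt (hW' : Integrable W')
    (hWd : ∀ x, HasDerivAt W (W' x) x) (x z : ℝ) : ‖W z - W x‖ ≤ ∫ t, ‖W' t‖ := by
  rw [← intervalIntegral.integral_eq_sub_of_hasDerivAt (fun t _ => hWd t) hW'.intervalIntegrable]
  exact (intervalIntegral.norm_integral_le_integral_norm_uIoc).trans
    (setIntegral_le_integral hW'.norm (.of_forall fun t => norm_nonneg _))

lemma norm_le_integral_norm_of_hasDerivAt (hW : Integrable W) (hW' : Integrable W')
    (hWd : ∀ x, HasDerivAt W (W' x) x) (x : ℝ) : ‖W x‖ ≤ ∫ t, ‖W' t‖ := by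
  -- otherwise `‖W‖` is bounded below by a positive constant, which is not integrable on `ℝ`
  by_contra! hx
  have hε : 0 < ‖W x‖ - ∫ t, ‖W' t‖ := sub_pos.2 hx
  have hconst : Integrable (fun _ : ℝ => ‖W x‖ - ∫ t, ‖W' t‖) := by
    refine hW.norm.mono aestronglyMeasurable_const (.of_forall fun z => ?_)
    rw [Real.norm_of_nonneg hε.le, norm_norm]
    linarith [norm_sub_le_integral_norm_of_hasDerivAt hW' hWd z x, norm_sub_norm_le (W x) (W z)]
  simp only [integrable_const_iff, hε.ne', false_or] at hconst
  simpa using measure_lt_top (volume : Measure ℝ) Set.univ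

lemma eLpNorm_two_le_of_hasDerivAt (hW : Integrable W) (hW' : Integrable W')
    (hWd : ∀ x, HasDerivAt W (W' x) x) :
    eLpNorm W 2 volume ≤ eLpNorm W 1 volume + eLpNorm W' 1 volume := by
  have hsup (x : ℝ) : ‖W x‖ₑ ≤ eLpNorm W' 1 volume := by
    rw [eLpNorm_one_eq_lintegral_enorm, ← ofReal_integral_norm_eq_lintegral_enorm hW',
      ← ofReal_norm]
    exact ENNReal.ofReal_le_ofReal (norm_le_integral_norm_of_hasDerivAt hW hW' hWd x)
  refine (ENNReal.pow_le_pow_left_iff two_ne_zero).1 ?_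
  calc eLpNorm W 2 volume ^ 2 = ∫⁻ x, ‖W x‖ₑ ^ 2 := sq_eLpNorm_two W
    _ ≤ ∫⁻ x, eLpNorm W' 1 volume * ‖W x‖ₑ :=
        lintegral_mono fun x => by rw [sq]; gcongr; exact hsup x
    _ = eLpNorm W' 1 volume * eLpNorm W 1 volume := by
        rw [lintegral_const_mul'' _ hW.1.enorm, eLpNorm_one_eq_lintegral_enorm (f := W)]
    _ ≤ (eLpNorm W 1 volume + eLpNorm W' 1 volume) ^ 2 := by
        rw [sq]; exact mul_le_mul' le_add_self le_self_add

lemma memLp_two_of_hasDerivAt (hW : Integrable W) (hW' : Integrable W')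
    (hWd : ∀ x, HasDerivAt W (W' x) x) : MemLp W 2 volume :=
  ⟨hW.1, (eLpNorm_two_le_of_hasDerivAt hW hW' hWd).trans_lt
    (ENNReal.add_lt_top.2 ⟨(memLp_one_iff_integrable.2 hW).2, (memLp_one_iff_integrable.2 hW').2⟩)⟩

end Kernel

section Calculus

variable {S : ℝ → ℝ} {M : ℝ}

lemma abs_sub_le_of_abs_deriv_le (hS : Differentiable ℝ S) (hM : ∀ x, |deriv S x| ≤ M)
    (a b : ℝ) : |S b - S a| ≤ M * |b - a| :=
  Convex.norm_image_sub_le_of_norm_deriv_le (fun x _ => hS x) (fun x _ => hM x) convex_univ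
    (Set.mem_univ a) (Set.mem_univ b)

lemma abs_sub_sub_deriv_mul_le (hS : ContDiff ℝ 2 S) (hM : ∀ x, |iteratedDeriv 2 S x| ≤ M)
    (a c : ℝ) : |S (a + c) - S a - deriv S a * c| ≤ M * c ^ 2 := by
  have hS' : Differentiable ℝ (deriv S) :=
    (hS.iterate_deriv' 1 1).differentiable one_ne_zero
  have hM' (x : ℝ) : |deriv (deriv S) x| ≤ M := by
    simpa [iteratedDeriv_succ] using hM x
  have hM0 : 0 ≤ M := (abs_nonneg _).trans (hM 0)
  have hderiv (t : ℝ) :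
      HasDerivAt (fun t => S t - deriv S a * t) (deriv S t - deriv S a) t :=
    (hS.differentiable two_ne_zero t).hasDerivAt.sub (hasDerivAt_const_mul (deriv S a))
  have hderiv_le (t : ℝ) (ht : t ∈ Metric.closedBall a |c|) :
      ‖deriv S t - deriv S a‖ ≤ M * |c| :=
    (abs_sub_le_of_abs_deriv_le hS' hM' a t).trans
      (mul_le_mul_of_nonneg_left (by simpa [Real.dist_eq] using ht) hM0)
  have key := Convex.norm_image_sub_le_of_norm_hasDerivWithin_le
    (fun t _ => (hderiv t).hasDerivWithinAt) hderiv_le (convex_closedBall a |c|)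
    (Metric.mem_closedBall_self (abs_nonneg c))
    (show a + c ∈ Metric.closedBall a |c| by simp [Metric.mem_closedBall])
  calc |S (a + c) - S a - deriv S a * c|
      = ‖(S (a + c) - deriv S a * (a + c)) - (S a - deriv S a * a)‖ := by
        rw [Real.norm_eq_abs]; ring_nf
    _ ≤ M * |c| * ‖a + c - a‖ := key
    _ = M * c ^ 2 := by simp [sq_abs, mul_assoc, ← sq]

end Calculus

section Linearization

variable {S W vbar v h : ℝ → ℝ} {M : ℝ}

lemma memLp_comp_conv_add_sub (hS : Differentiable ℝ S) (hM : ∀ x, |deriv S x| ≤ M)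
    (hW : Integrable W) (hW2 : MemLp W 2) (hvbar_meas : AEStronglyMeasurable vbar)
    (hvbar : ∀ᵐ x, Integrable fun y => W (x - y) * vbar y) (hv : MemLp v 2) :
    MemLp (fun x => S (∫ y, W (x - y) * (vbar y + v y)) - S (∫ y, W (x - y) * vbar y)) 2 := by
  have hS_conv {g : ℝ → ℝ} (hg : AEStronglyMeasurable g) :
      AEStronglyMeasurable fun x => S (∫ y, W (x - y) * g y) :=
    hS.continuous.comp_aestronglyMeasurable (aestronglyMeasurable_conv hW.1 hg)
  refine (memLp_conv hW hv).of_le_mul (c := M)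
    ((hS_conv (hvbar_meas.add hv.1)).sub (hS_conv hvbar_meas)) ?_
  filter_upwards [hvbar] with x hx
  rw [integral_mul_add hx (integrable_conv_integrand hW2 hv x)]
  simpa using abs_sub_le_of_abs_deriv_le hS hM (∫ y, W (x - y) * vbar y)
    ((∫ y, W (x - y) * vbar y) + ∫ y, W (x - y) * v y)

lemma eLpNorm_comp_conv_taylor_remainder_le (hS : ContDiff ℝ 2 S)
    (hM : ∀ x, |iteratedDeriv 2 S x| ≤ M) (hW2 : MemLp W 2)
    (hvbar : ∀ᵐ x, Integrable fun y => W (x - y) * vbar y) (hv : MemLp v 2) (hh : MemLp h 2) :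
    eLpNorm (fun x =>
        S (∫ y, W (x - y) * (vbar y + (v y + h y)))
        - S (∫ y, W (x - y) * (vbar y + v y))
        - deriv S (∫ y, W (x - y) * (vbar y + v y)) * (∫ y, W (x - y) * h y)) 2 volume
      ≤ ENNReal.ofReal M * (eLpNorm W 2 volume * eLpNorm W 1 volume) * eLpNorm h 2 volume ^ 2 := by
  have hM0 : 0 ≤ M := (abs_nonneg _).trans (hM 0)
  have hpointwise : ∀ᵐ x, ‖S (∫ y, W (x - y) * (vbar y + (v y + h y)))
        - S (∫ y, W (x - y) * (vbar y + v y))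
        - deriv S (∫ y, W (x - y) * (vbar y + v y)) * (∫ y, W (x - y) * h y)‖ₑ
      ≤ ENNReal.ofReal M * (eLpNorm W 2 volume * eLpNorm h 2 volume)
        * ‖∫ y, W (x - y) * h y‖ₑ := by
    filter_upwards [hvbar] with x hx
    have hsplit : ∫ y, W (x - y) * (vbar y + (v y + h y))
        = (∫ y, W (x - y) * (vbar y + v y)) + ∫ y, W (x - y) * h y := by
      have hxv : Integrable fun y => W (x - y) * (vbar y + v y) := by
        simp_rw [mul_add]; exact hx.add (integrable_conv_integrand hW2 hv x)
      rw [← integral_mul_add hxv (integrable_conv_integrand hW2 hh x)]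
      simp_rw [add_assoc]
    set c := ∫ y, W (x - y) * h y
    calc _ ≤ ENNReal.ofReal (M * c ^ 2) := by
          rw [hsplit, Real.enorm_eq_ofReal_abs]
          exact ENNReal.ofReal_le_ofReal (abs_sub_sub_deriv_mul_le hS hM _ _)
      _ = ENNReal.ofReal M * ‖c‖ₑ * ‖c‖ₑ := by
          rw [ENNReal.ofReal_mul hM0, Real.enorm_eq_ofReal_abs, mul_assoc,
            ← ENNReal.ofReal_mul (abs_nonneg _), abs_mul_abs_self, sq]
      _ ≤ _ := by gcongr; exact enorm_conv_le hW2.1 hh.1 x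
  calc _ ≤ ENNReal.ofReal M * (eLpNorm W 2 volume * eLpNorm h 2 volume)
        * eLpNorm (fun x => ∫ y, W (x - y) * h y) 2 volume :=
        eLpNorm_le_mul_eLpNorm_of_ae_le_mul'' 2 (aestronglyMeasurable_conv hW2.1 hh.1) hpointwise
    _ ≤ ENNReal.ofReal M * (eLpNorm W 2 volume * eLpNorm h 2 volume)
        * (eLpNorm W 1 volume * eLpNorm h 2 volume) := by
        gcongr; exact eLpNorm_conv_le hW2.1.aemeasurable hh.1.aemeasurable
    _ = _ := by ring

end Linearization

/-- Fréchet differentiability of `F̃(v) = S(W ⋆ (v̄+v)) − S(W ⋆ v̄)` on `L²(ℝ)`: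
`F̃` maps `L²` to `L²`, the candidate derivative at `v` in direction `h` is
`S'(W ⋆ (v̄+v)) ⬝ (W ⋆ h)`, and the Taylor remainder satisfies
`‖F̃(v+h) − F̃(v) − dF̃(v)h‖₂ ≤ (C/2) ‖S''‖_∞ ‖W‖²_{W^{1,1}} ‖h‖₂²`, where `C`
depends only on the Banach algebra constant of `H¹(ℝ)`. -/
theorem stmt7 (S : ℝ → ℝ) (hS : ContDiff ℝ 2 S)
    (MS1 MS2 : ℝ) (hMS1 : ∀ x, |deriv S x| ≤ MS1) (hMS2 : ∀ x, |iteratedDeriv 2 S x| ≤ MS2)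
    (W W' : ℝ → ℝ) (hW : Integrable W (volume : Measure ℝ))
    (hW' : Integrable W' (volume : Measure ℝ))
    (hWd : ∀ x, HasDerivAt W (W' x) x)
    (vbar : ℝ → ℝ) (hvm : Measurable vbar)
    (hvbar : ∀ᵐ x ∂(volume : Measure ℝ), Integrable (fun y => W (x - y) * vbar y)) :
    (∀ v : ℝ → ℝ, MemLp v 2 (volume : Measure ℝ) →
      MemLp (fun x => S (∫ y, W (x - y) * (vbar y + v y)) - S (∫ y, W (x - y) * vbar y))
        2 (volume : Measure ℝ)) ∧
    ∃ C > (0:ℝ), ∀ v h : ℝ → ℝ,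
      MemLp v 2 (volume : Measure ℝ) → MemLp h 2 (volume : Measure ℝ) →
      eLpNorm (fun x =>
            S (∫ y, W (x - y) * (vbar y + (v y + h y)))
            - S (∫ y, W (x - y) * (vbar y + v y))
            - deriv S (∫ y, W (x - y) * (vbar y + v y)) * (∫ y, W (x - y) * h y))
          2 volume
        ≤ ENNReal.ofReal (C / 2 * MS2)
            * (eLpNorm W 1 volume + eLpNorm W' 1 volume) ^ 2
            * (eLpNorm h 2 volume) ^ 2 := by
  have hW2_le := eLpNorm_two_le_of_hasDerivAt hW hW' hWd
  have hW2 := memLp_two_of_hasDerivAt hW hW' hWd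
  refine ⟨fun v hv => memLp_comp_conv_add_sub (hS.differentiable two_ne_zero) hMS1 hW hW2
    hvm.aestronglyMeasurable hvbar hv, 2, two_pos, fun v h hv hh => ?_⟩
  calc _ ≤ ENNReal.ofReal MS2 * (eLpNorm W 2 volume * eLpNorm W 1 volume)
        * eLpNorm h 2 volume ^ 2 :=
        eLpNorm_comp_conv_taylor_remainder_le hS hMS2 hW2 hvbar hv hh
    _ ≤ _ := by
        rw [div_self two_ne_zero, one_mul, sq (_ + _)]
        gcongr
        exact le_self_add
end

section
/- Let A be a closed operator on a Hilbert space, ψ, φ nonzero vectors with ⟨ψ, φ⟩ ≠ 0, φ ∈ ker A, and let P v = v − (⟨v, ψ⟩/⟨φ, ψ⟩) φ be the projection onto ψ^⊥ along φ. Then for every z in the resolvent set of A with z ≠ 0, z belongs to the resolvent set of PA restricted to the range of P, with inverse given explicitly by (zI − PA)⁻¹ P r = Q_z R(z,A) P r, where Q_z v = v − z (⟨v, ψ⟩/⟨φ, ψ⟩) R(z,A) φ and R(z,A) = (zI−A)⁻¹. In particular ρ(A) \ {0} ⊆ ρ(PA|_{ran P}) \ {0}. -/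
open scoped ComplexInnerProductSpace InnerProductSpace

/-!
Since `Aφ = 0`, the resolvent acts on `φ` as `R(z,A)φ = z⁻¹ φ`, so `Q_z` is just the oblique
projection `P`. As `P` fixes `ran P` and `A P = A`, applying `P` to `(z − A) R(z,A) P r = P r` gives
`(z − PA) P R(z,A) P r = P r`. Conversely, if `w ∈ ran P` and `(z − PA) w = 0`, then `(z − A) w` is
a multiple of `φ`, hence so is `w = R(z,A)(z − A) w`; a multiple of `φ` orthogonal to `ψ` is `0`.
-/

namespace BorderedResolvent

variable {𝕜 H : Type*} [RCLike 𝕜] [NormedAddCommGroup H] [InnerProductSpace 𝕜 H]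

variable (𝕜) in
def obliqueProj (ψ φ : H) : H →ₗ[𝕜] H where
  toFun v := v - (⟪ψ, v⟫_𝕜 / ⟪ψ, φ⟫_𝕜) • φ
  map_add' u v := by
    simp only [inner_add_right, add_div, add_smul]
    abel
  map_smul' c v := by
    simp only [inner_smul_right, RingHom.id_apply, smul_sub, smul_smul, mul_div_assoc]

variable {ψ φ : H}

theorem obliqueProj_apply (v : H) :
    obliqueProj 𝕜 ψ φ v = v - (⟪ψ, v⟫_𝕜 / ⟪ψ, φ⟫_𝕜) • φ :=
  rfl

theorem inner_obliqueProj (hψφ : ⟪ψ, φ⟫_𝕜 ≠ 0) (v : H) : ⟪ψ, obliqueProj 𝕜 ψ φ v⟫_𝕜 = 0 := by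
  rw [obliqueProj_apply, inner_sub_right, inner_smul_right, div_mul_cancel₀ _ hψφ, sub_self]

theorem obliqueProj_eq_self {v : H} (hv : ⟪ψ, v⟫_𝕜 = 0) : obliqueProj 𝕜 ψ φ v = v := by
  rw [obliqueProj_apply, hv, zero_div, zero_smul, sub_zero]

theorem obliqueProj_idem (hψφ : ⟪ψ, φ⟫_𝕜 ≠ 0) (v : H) :
    obliqueProj 𝕜 ψ φ (obliqueProj 𝕜 ψ φ v) = obliqueProj 𝕜 ψ φ v :=
  obliqueProj_eq_self (inner_obliqueProj hψφ v)

theorem map_obliqueProj {A : H →ₗ[𝕜] H} (hAφ : A φ = 0) (v : H) :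
    A (obliqueProj 𝕜 ψ φ v) = A v := by
  rw [obliqueProj_apply, map_sub, map_smul, hAφ, smul_zero, sub_zero]

theorem smul_eq_zero_of_inner_smul_eq_zero (hψφ : ⟪ψ, φ⟫_𝕜 ≠ 0) {b : 𝕜}
    (h : ⟪ψ, b • φ⟫_𝕜 = 0) : b • φ = 0 := by
  rw [inner_smul_right, mul_eq_zero, or_iff_left hψφ] at h
  rw [h, zero_smul]

variable {F : Type*} [FunLike F H H]

theorem sub_resolvent_smul_eq_obliqueProj {R : F} {z : 𝕜} (hz : z ≠ 0)
    (hRφ : R φ = z⁻¹ • φ) (v : H) :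
    v - (z * ⟪ψ, v⟫_𝕜 / ⟪ψ, φ⟫_𝕜) • R φ = obliqueProj 𝕜 ψ φ v := by
  rw [obliqueProj_apply, hRφ, smul_smul, mul_div_assoc, mul_comm z, mul_assoc,
    mul_inv_cancel₀ hz, mul_one]

variable [LinearMapClass F 𝕜 H H]

theorem resolvent_apply_eq_inv_smul {A : H →ₗ[𝕜] H} {R : F} {z : 𝕜} (hz : z ≠ 0)
    (hAφ : A φ = 0) (hR : R (z • φ - A φ) = φ) : R φ = z⁻¹ • φ := by
  rw [hAφ, sub_zero, map_smul] at hR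
  rw [eq_inv_smul_iff₀ hz, hR]

theorem smul_obliqueProj_sub_obliqueProj_map (hψφ : ⟪ψ, φ⟫_𝕜 ≠ 0) {A : H →ₗ[𝕜] H}
    (hAφ : A φ = 0) {z : 𝕜} {u r : H} (hu : z • u - A u = obliqueProj 𝕜 ψ φ r) :
    z • obliqueProj 𝕜 ψ φ u - obliqueProj 𝕜 ψ φ (A (obliqueProj 𝕜 ψ φ u)) =
      obliqueProj 𝕜 ψ φ r := by
  have hAu : A u = z • u - obliqueProj 𝕜 ψ φ r := by rw [← hu, sub_sub_cancel]
  rw [map_obliqueProj hAφ, hAu, map_sub, map_smul, obliqueProj_idem hψφ, sub_sub_cancel]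

theorem eq_zero_of_smul_sub_obliqueProj_map_eq_zero (hψφ : ⟪ψ, φ⟫_𝕜 ≠ 0) {A : H →ₗ[𝕜] H}
    {R : F} {z : 𝕜} (hRφ : R φ = z⁻¹ • φ) {w : H} (hRw : R (z • w - A w) = w)
    (hw : ⟪ψ, w⟫_𝕜 = 0) (h0 : z • w - obliqueProj 𝕜 ψ φ (A w) = 0) : w = 0 := by
  have hres : z • w - A w = -(⟪ψ, A w⟫_𝕜 / ⟪ψ, φ⟫_𝕜) • φ := by
    rw [obliqueProj_apply, sub_sub_eq_add_sub] at h0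
    rwa [neg_smul, eq_neg_iff_add_eq_zero, sub_add_eq_add_sub]
  have hw_mem : w = (-(⟪ψ, A w⟫_𝕜 / ⟪ψ, φ⟫_𝕜) * z⁻¹) • φ :=
    calc w = R (z • w - A w) := hRw.symm
      _ = _ := by rw [hres, map_smul, hRφ, smul_smul]
  rw [hw_mem] at hw ⊢
  exact smul_eq_zero_of_inner_smul_eq_zero hψφ hw

end BorderedResolvent

open BorderedResolvent in
theorem stmt13_general {H : Type*} [NormedAddCommGroup H] [InnerProductSpace ℂ H]
    (A : H →ₗ[ℂ] H) (φ ψ : H) (hψφ : ⟪ψ, φ⟫ ≠ 0) (hAφ : A φ = 0)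
    (z : ℂ) (hz : z ≠ 0) (Rz : H →L[ℂ] H)
    (hRz₁ : ∀ v, Rz (z • v - A v) = v) (hRz₂ : ∀ v, z • Rz v - A (Rz v) = v) :
    let P : H → H := fun v => v - (⟪ψ, v⟫ / ⟪ψ, φ⟫) • φ
    let Q : H → H := fun v => v - (z * ⟪ψ, v⟫ / ⟪ψ, φ⟫) • Rz φ
    (∀ r : H,
      z • Q (Rz (P r)) - P (A (Q (Rz (P r)))) = P r ∧ ⟪ψ, Q (Rz (P r))⟫ = 0) ∧
    (∀ w : H, ⟪ψ, w⟫ = 0 → z • w - P (A w) = 0 → w = 0) := by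
  intro P Q
  have hRφ : Rz φ = z⁻¹ • φ := resolvent_apply_eq_inv_smul hz hAφ (hRz₁ φ)
  have hQP : Q = P := funext (sub_resolvent_smul_eq_obliqueProj hz hRφ)
  rw [hQP]
  exact ⟨fun r => ⟨smul_obliqueProj_sub_obliqueProj_map hψφ hAφ (hRz₂ _),
      inner_obliqueProj hψφ _⟩,
    fun w hw h0 => eq_zero_of_smul_sub_obliqueProj_map_eq_zero hψφ hRφ (hRz₁ w) hw h0⟩

/-- Bordered resolvent lemma: let `A` be an operator on a complex Hilbert space with
`Aφ = 0`, `⟨ψ, φ⟩ ≠ 0`, `P v = v − (⟨ψ,v⟩/⟨ψ,φ⟩) φ` the projection onto `ψ^⊥` along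
`φ`, and `z ≠ 0` in the resolvent set of `A` with resolvent `R(z,A)`. Then `z` is in
the resolvent set of `PA` restricted to `ran P`: with
`Q_z v = v − z(⟨ψ,v⟩/⟨ψ,φ⟩) R(z,A)φ`, the vector `w = Q_z R(z,A) P r` solves
`(z − PA) w = P r` in `ran P`, and `z − PA` is injective on `ran P`. -/
theorem stmt13 {H : Type*} [NormedAddCommGroup H] [InnerProductSpace ℂ H]
    [CompleteSpace H]
    (A : H →ₗ[ℂ] H) (φ ψ : H) (hφ : φ ≠ 0) (hψφ : ⟪ψ, φ⟫ ≠ 0) (hAφ : A φ = 0)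
    (z : ℂ) (hz : z ≠ 0) (Rz : H →L[ℂ] H)
    (hRz₁ : ∀ v, Rz (z • v - A v) = v) (hRz₂ : ∀ v, z • Rz v - A (Rz v) = v) :
    let P : H → H := fun v => v - (⟪ψ, v⟫ / ⟪ψ, φ⟫) • φ
    let Q : H → H := fun v => v - (z * ⟪ψ, v⟫ / ⟪ψ, φ⟫) • Rz φ
    (∀ r : H,
      z • Q (Rz (P r)) - P (A (Q (Rz (P r)))) = P r ∧ ⟪ψ, Q (Rz (P r))⟫ = 0) ∧
    (∀ w : H, ⟪ψ, w⟫ = 0 → z • w - P (A w) = 0 → w = 0) :=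
  stmt13_general A φ ψ hψφ hAφ z hz Rz hRz₁ hRz₂
end
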